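/- arXiv:2504.01720 — 3 statements merged into one kernel-verified Lean document; each statement's English description precedes it below -/
import Mathlib

section
/- The family of languages accepted by input-erasing two-way general finite automata equals the family of linear languages. -/
namespace IETW

/-- An input-erasing two-way general finite automaton (IETWGFA). -/
structure GFA (T : Type) : Type 1 where
  Q : Type
  finQ : Finite Q
  start : Q
  accept : Set Q
  /-- Left rules: `(x, q, p)` represents `x q → p`. -/
  ruleL : Set (List T × Q × Q)
  /-- Right rules: `(q, x, p)` represents `q x → p`. -/
  ruleR : Set (Q × List T × Q)
  finL : ruleL.Finite
  finR : ruleR.Finite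

variable {T : Type}

/-- One move, labelled by its direction (`true` = left) and the number of erased symbols. -/
inductive GFA.Step (M : GFA T) :
    List T × M.Q × List T → Bool × ℕ → List T × M.Q × List T → Prop
  | left {u v x : List T} {q p : M.Q} (h : (x, q, p) ∈ M.ruleL) :
      GFA.Step M (u ++ x, q, v) (true, x.length) (u, p, v)
  | right {u v x : List T} {q p : M.Q} (h : (q, x, p) ∈ M.ruleR) :
      GFA.Step M (u, q, x ++ v) (false, x.length) (u, p, v)

/-- A computation along a list of move labels. -/
inductive GFA.Chain (M : GFA T) :
    List T × M.Q × List T → List (Bool × ℕ) → List T × M.Q × List T → Prop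
  | nil (c) : GFA.Chain M c [] c
  | cons {c c' c'' l ls} (h : GFA.Step M c l c') (h' : GFA.Chain M c' ls c'') :
      GFA.Chain M c (l :: ls) c''

/-- `L(M)`. -/
def GFA.lang (M : GFA T) : Set (List T) :=
  {w | ∃ x y ls f, w = x ++ y ∧ f ∈ M.accept ∧ M.Chain (x, M.start, y) ls ([], f, [])}

/-- The moves strictly alternate between left and right. -/
def Alternating (ls : List (Bool × ℕ)) : Prop :=
  ls.Chain' (fun a b => a.1 ≠ b.1)

/-- An even computation: alternating, of even length, and each odd-indexed move reads
the same number of symbols as the following move. -/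
def EvenTrace (ls : List (Bool × ℕ)) : Prop :=
  ls.length % 2 = 0 ∧ Alternating ls ∧
    ∀ i, 2 * i + 1 < ls.length →
      (ls.getD (2 * i) (true, 0)).2 = (ls.getD (2 * i + 1) (true, 0)).2

/-- An initialized even computation: one move followed by an even computation. -/
def InitEvenTrace (ls : List (Bool × ℕ)) : Prop :=
  ∃ l ls', ls = l :: ls' ∧ EvenTrace ls'

/-- `L(M)_alt`. -/
def GFA.langAlt (M : GFA T) : Set (List T) :=
  {w | ∃ x y ls f, w = x ++ y ∧ f ∈ M.accept ∧ Alternating ls ∧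
    M.Chain (x, M.start, y) ls ([], f, [])}

/-- `L(M)_even`. -/
def GFA.langEven (M : GFA T) : Set (List T) :=
  {w | ∃ x y ls f, w = x ++ y ∧ f ∈ M.accept ∧ EvenTrace ls ∧
    M.Chain (x, M.start, y) ls ([], f, [])}

/-- `L(M)_init-even`. -/
def GFA.langInitEven (M : GFA T) : Set (List T) :=
  {w | ∃ x y ls f, w = x ++ y ∧ f ∈ M.accept ∧ InitEvenTrace ls ∧
    M.Chain (x, M.start, y) ls ([], f, [])}

/-- All rules read at most one symbol (IETWSFA). -/
def GFA.Simple (M : GFA T) : Prop :=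
  (∀ r ∈ M.ruleL, r.1.length ≤ 1) ∧ (∀ r ∈ M.ruleR, r.2.1.length ≤ 1)

/-- No ε-rules: every rule reads at least one symbol. -/
def GFA.EpsFree (M : GFA T) : Prop :=
  (∀ r ∈ M.ruleL, r.1 ≠ ([] : List T)) ∧ (∀ r ∈ M.ruleR, r.2.1 ≠ ([] : List T))

/-- A linear grammar: rules `A → x B y` (encoded `(A, x, some (B, y))`)
or `A → x` (encoded `(A, x, none)`). -/
structure LG (T : Type) : Type 1 where
  N : Type
  finN : Finite N
  start : N
  rules : Set (N × List T × Option (N × List T))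
  finR : rules.Finite

/-- One derivation step on sentential forms `u A v`. -/
inductive LG.Der (G : LG T) :
    List T × G.N × List T → List T × G.N × List T → Prop
  | step {u v x y : List T} {A B : G.N} (h : (A, x, some (B, y)) ∈ G.rules) :
      LG.Der G (u, A, v) (u ++ x, B, y ++ v)

/-- `L(G)`. -/
def LG.lang (G : LG T) : Set (List T) :=
  {w | ∃ u A v x, Relation.ReflTransGen G.Der ([], G.start, []) (u, A, v) ∧
    (A, x, none) ∈ G.rules ∧ w = u ++ x ++ v}

/-- Even linear grammar: `|x| = |y|` in every rule `A → x B y`. -/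
def LG.Even (G : LG T) : Prop :=
  ∀ r ∈ G.rules, ∀ B (y : List T), r.2.2 = some (B, y) → r.2.1.length = y.length

/-!
A configuration `u q v` of an IETWGFA has the shape of a linear sentential form `u A v`, and the
move `x q → p` (resp. `q x → p`) undoes the linear rule `p → x q` (resp. `p → q x`). So an
accepting computation, read backwards, is a derivation of a linear grammar whose nonterminals are
the states. Conversely, a step `A → x B y` of a derivation is undone by two moves: erase `x` on the
left, entering a state that remembers the rule, then erase `y` on the right; a final rule
`A → x` is undone by one left move from the start state.
-/

open Relation

namespace GFA

variable (M : GFA T)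

def Accepts (c : List T × M.Q × List T) : Prop :=
  ∃ ls, ∃ f ∈ M.accept, M.Chain c ls ([], f, [])

variable {M}

theorem mem_lang_iff {w : List T} :
    w ∈ M.lang ↔ ∃ x y, w = x ++ y ∧ M.Accepts (x, M.start, y) :=
  ⟨fun ⟨x, y, ls, f, hw, hf, h⟩ => ⟨x, y, hw, ls, f, hf, h⟩,
    fun ⟨x, y, hw, ls, f, hf, h⟩ => ⟨x, y, ls, f, hw, hf, h⟩⟩

theorem accepts_of_mem_accept {f : M.Q} (hf : f ∈ M.accept) : M.Accepts ([], f, []) :=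
  ⟨[], f, hf, .nil _⟩

theorem Accepts.of_step {c c' l} (h : M.Step c l c') (hc' : M.Accepts c') : M.Accepts c :=
  let ⟨ls, f, hf, hch⟩ := hc'
  ⟨l :: ls, f, hf, .cons h hch⟩

theorem Accepts.backward_induction {P : List T × M.Q × List T → Prop}
    (final : ∀ f ∈ M.accept, P ([], f, [])) (step : ∀ c l c', M.Step c l c' → P c' → P c)
    {c} (h : M.Accepts c) : P c := by
  obtain ⟨ls, f, hf, hch⟩ := h
  suffices ∀ {c c' ls}, M.Chain c ls c' → P c' → P c from this hch (final f hf)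
  intro c c' ls hch hc'
  induction hch with
  | nil => exact hc'
  | cons hstep _ ih => exact step _ _ _ hstep (ih hc')

variable (M)

/-- The nonterminal `some q` derives exactly what `M` accepts from state `q`; the fresh start
symbol `none` guesses the accepting state. -/
def toLG : LG T where
  N := Option M.Q
  finN := by have := M.finQ; infer_instance
  start := none
  rules :=
    (fun f => (none, [], some (some f, []))) '' M.accept ∪
    (fun r => (some r.2.2, r.1, some (some r.2.1, []))) '' M.ruleL ∪
    (fun r => (some r.2.2, [], some (some r.1, r.2.1))) '' M.ruleR ∪
    {(some M.start, [], none)}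
  finR := by
    have := M.finQ
    exact (((Set.toFinite _).image _).union (M.finL.image _)).union (M.finR.image _)
      |>.union (Set.finite_singleton _)

def AcceptsOrInitial : List T × Option M.Q × List T → Prop
  | (u, none, v) => u = [] ∧ v = []
  | (u, some q, v) => M.Accepts (u, q, v)

variable {M}

theorem AcceptsOrInitial.of_der {c c'} (h : M.toLG.Der c c') (hc : M.AcceptsOrInitial c) :
    M.AcceptsOrInitial c' := by
  obtain ⟨hr⟩ := h
  rcases hr with ((⟨f, hf, ⟨⟩⟩ | ⟨⟨x, q, p⟩, hxqp, ⟨⟩⟩) | ⟨⟨q, y, p⟩, hqyp, ⟨⟩⟩) | hr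
  · obtain ⟨rfl, rfl⟩ := hc
    exact accepts_of_mem_accept hf
  · exact hc.of_step (.left hxqp)
  · rw [List.append_nil]
    exact hc.of_step (.right hqyp)
  · cases Set.mem_singleton_iff.mp hr

theorem acceptsOrInitial_of_derives {c} (h : ReflTransGen M.toLG.Der ([], M.toLG.start, []) c) :
    M.AcceptsOrInitial c := by
  induction h with
  | refl => exact ⟨rfl, rfl⟩
  | tail _ hder ih => exact ih.of_der hder

theorem derives_of_accepts {u q v} (h : M.Accepts (u, q, v)) :
    ReflTransGen M.toLG.Der ([], M.toLG.start, []) (u, some q, v) := by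
  refine Accepts.backward_induction
    (P := fun c => ReflTransGen M.toLG.Der ([], M.toLG.start, []) (c.1, some c.2.1, c.2.2))
    (fun f hf => .single (.step (G := M.toLG) (u := []) (v := [])
      (Or.inl (Or.inl (Or.inl ⟨f, hf, rfl⟩))))) ?_ h
  rintro _ _ _ (@⟨u, v, x, q, p, hxqp⟩ | @⟨u, v, y, q, p, hqyp⟩) ih
  · exact ih.tail (.step (G := M.toLG) (u := u) (v := v) (Or.inl (Or.inl (Or.inr ⟨_, hxqp, rfl⟩))))
  · simpa using ih.tail (.step (G := M.toLG) (u := u) (v := v) (Or.inl (Or.inr ⟨_, hqyp, rfl⟩)))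

theorem toLG_lang : M.toLG.lang = M.lang := by
  ext w
  rw [mem_lang_iff]
  constructor
  · rintro ⟨u, A, v, x, hder, hterm, rfl⟩
    rcases hterm with ((⟨_, _, ⟨⟩⟩ | ⟨_, _, ⟨⟩⟩) | ⟨_, _, ⟨⟩⟩) | hterm
    cases Set.mem_singleton_iff.mp hterm
    exact ⟨u, v, by simp, acceptsOrInitial_of_derives hder⟩
  · rintro ⟨x, y, rfl, hacc⟩
    exact ⟨x, some M.start, y, [], derives_of_accepts hacc, Or.inr rfl, by simp⟩

end GFA

namespace LG

variable (G : LG T)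

def rightContext (r : G.N × List T × Option (G.N × List T)) : List T :=
  r.2.2.elim [] Prod.snd

abbrev GFAState : Type := Option (G.N ⊕ G.rules)

def leftRule : G.rules → List T × G.GFAState × G.GFAState
  | ⟨(A, x, none), _⟩ => (x, none, some (.inl A))
  | r@⟨(_, x, some (B, _)), _⟩ => (x, some (.inl B), some (.inr r))

def rightRule (r : G.rules) : G.GFAState × List T × G.GFAState :=
  (some (.inr r), G.rightContext r.1, some (.inl r.1.1))

/-- State `some (inl A)` stands for the nonterminal `A`, and `some (inr r)` for a rule
`r = A → x B y` whose `x` has been erased and whose `y` has not. -/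
def toGFA : GFA T where
  Q := G.GFAState
  finQ := by have := G.finN; have := G.finR.to_subtype; infer_instance
  start := none
  accept := {some (.inl G.start)}
  ruleL := Set.range G.leftRule
  ruleR := Set.range G.rightRule
  finL := by have := G.finR.to_subtype; exact Set.finite_range _
  finR := by have := G.finR.to_subtype; exact Set.finite_range _

def Derivable : List T × G.GFAState × List T → Prop
  | (u, none, v) => u ++ v ∈ G.lang
  | (u, some (.inl A), v) => ReflTransGen G.Der ([], G.start, []) (u, A, v)
  | (u, some (.inr r), v) => ∃ v', v = G.rightContext r.1 ++ v' ∧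
      ReflTransGen G.Der ([], G.start, []) (u, r.1.1, v')

variable {G}

theorem derivable_of_accepts {c} (h : G.toGFA.Accepts c) : G.Derivable c := by
  refine GFA.Accepts.backward_induction (fun f hf => ?_) ?_ h
  · obtain rfl : f = some (.inl G.start) := hf
    exact .refl
  rintro _ _ _ (@⟨u, v, x, q, p, ⟨⟨⟨A, x, _ | ⟨B, y⟩⟩, hr⟩, ⟨⟩⟩⟩ | @⟨u, v, y, q, p, ⟨r, ⟨⟩⟩⟩) ih
  · exact ⟨u, A, v, x, ih, hr, rfl⟩
  · obtain ⟨v', rfl, hder⟩ := ih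
    exact hder.tail (.step hr)
  · exact ⟨v, rfl, ih⟩

theorem accepts_of_derives {c} (h : ReflTransGen G.Der ([], G.start, []) c) :
    G.toGFA.Accepts (c.1, some (.inl c.2.1), c.2.2) := by
  induction h with
  | refl => exact GFA.accepts_of_mem_accept rfl
  | tail _ hder ih =>
    obtain ⟨hr⟩ := hder
    exact (ih.of_step (.right (M := G.toGFA) ⟨⟨_, hr⟩, rfl⟩)).of_step (.left ⟨⟨_, hr⟩, rfl⟩)

theorem toGFA_lang : G.toGFA.lang = G.lang := by
  ext w
  rw [GFA.mem_lang_iff]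
  constructor
  · rintro ⟨x, y, rfl, h⟩
    exact derivable_of_accepts h
  · rintro ⟨u, A, v, x, hder, hterm, rfl⟩
    exact ⟨u ++ x, v, rfl, (accepts_of_derives hder).of_step (.left ⟨⟨_, hterm⟩, rfl⟩)⟩

end LG

theorem ietwgfa_family_eq_linear (T : Type) :
    {L : Set (List T) | ∃ M : GFA T, M.lang = L} =
      {L : Set (List T) | ∃ G : LG T, G.lang = L} := by
  ext L
  constructor
  · rintro ⟨M, rfl⟩
    exact ⟨M.toLG, M.toLG_lang⟩
  · rintro ⟨G, rfl⟩
    exact ⟨G.toGFA, G.toGFA_lang⟩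

end IETW
end

section
/- The family of languages accepted by IETWGFAs under even computation is incomparable with each of the families of singleton languages, finite languages, and regular languages (i.e., neither is a subset of the other, and their intersection is nonempty, in each case). -/
namespace IETW

variable {T : Type}

/-- Two families of languages are incomparable. -/
def Incomparable {T : Type} (X Y : Set (Set (List T))) : Prop :=
  ¬ X ⊆ Y ∧ ¬ Y ⊆ X ∧ (X ∩ Y).Nonempty

/-! Every move of an even computation is paired with one erasing equally many symbols, so
all words of `L(M)_even` have even length and the singleton `{a}` lies outside the family.
The rule-free automaton gives `{ε}`, common to all four families, and the automaton erasing
`a` on the left and `b` on the right gives `{aⁿbⁿ}` under even computations, which is not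
regular by Myhill–Nerode. -/

theorem incomparable_of_witnesses {X S Y R : Set (Set (List T))} (hSY : S ⊆ Y) (hYR : Y ⊆ R)
    {L₁ L₂ L₃ : Set (List T)} (h₁ : L₁ ∈ X \ R) (h₂ : L₂ ∈ S \ X) (h₃ : L₃ ∈ X ∩ S) :
    Incomparable X Y :=
  ⟨fun h => h₁.2 (hYR (h h₁.1)), fun h => h₂.2 (h (hSY h₂.1)), ⟨L₃, h₃.1, hSY h₃.2⟩⟩

theorem _root_.Language.IsRegular.of_finite {L : Language T}
    (hL : Set.Finite (L : Set (List T))) : L.IsRegular := by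
  apply Language.IsRegular.of_finite_range_leftQuotient
  have hprefixes : {x : List T | ∃ y, x ++ y ∈ L}.Finite := by
    refine (hL.biUnion fun w _ => w.inits.finite_toSet).subset ?_
    rintro x ⟨y, hy⟩
    exact Set.mem_biUnion hy ((List.mem_inits _ _).2 (List.prefix_append x y))
  refine ((hprefixes.image L.leftQuotient).insert 0).subset ?_
  rintro _ ⟨x, rfl⟩
  by_cases hx : ∃ y, x ++ y ∈ L
  · exact Or.inr ⟨x, hx, rfl⟩
  · exact Or.inl (Set.eq_empty_of_forall_notMem fun y hy => hx ⟨y, hy⟩)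

def anbn (a b : T) : Language T :=
  {w | ∃ n, w = List.replicate n a ++ List.replicate n b}

theorem not_isRegular_anbn {a b : T} (hab : a ≠ b) : ¬ (anbn a b).IsRegular := by
  classical
  intro hreg
  have hinj : Function.Injective fun m => (anbn a b).leftQuotient (List.replicate m a) := by
    intro m k hmk
    have hk : List.replicate k b ∈ (anbn a b).leftQuotient (List.replicate m a) := by
      simp only at hmk; rw [hmk]; exact ⟨k, rfl⟩
    obtain ⟨n, hn⟩ := hk
    have hcount_a := congrArg (List.count a) hn
    have hcount_b := congrArg (List.count b) hn
    simp [List.count_replicate, hab, hab.symm] at hcount_a hcount_b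
    omega
  exact Set.infinite_range_of_injective hinj
    (hreg.finite_range_leftQuotient.subset (Set.range_subset_iff.2 fun m => ⟨_, rfl⟩))

theorem GFA.Chain.length_add_length {M : GFA T} {c c' ls} (h : M.Chain c ls c') :
    c.1.length + c.2.2.length = (ls.map Prod.snd).sum + c'.1.length + c'.2.2.length := by
  induction h with
  | nil c => simp
  | cons h _ ih =>
    cases h <;> simp only [List.length_append, List.map_cons, List.sum_cons] at ih ⊢ <;> omega

theorem EvenTrace.nil : EvenTrace [] :=
  ⟨rfl, List.isChain_nil, fun i hi => by simp at hi⟩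

theorem EvenTrace.cons_cons {l l' : Bool × ℕ} {ls : List (Bool × ℕ)} (hdir : l.1 ≠ l'.1)
    (hread : l.2 = l'.2) (hhead : ∀ m ∈ ls.head?, l'.1 ≠ m.1) (h : EvenTrace ls) :
    EvenTrace (l :: l' :: ls) := by
  obtain ⟨hlen, halt, hpairs⟩ := h
  refine ⟨by simp [hlen, Nat.add_mod], (halt.cons hhead).cons (by simpa using hdir), ?_⟩
  rintro (_ | i) hi
  · exact hread
  · exact hpairs i (by simp at hi; omega)

theorem EvenTrace.of_cons_cons {l l' : Bool × ℕ} {ls : List (Bool × ℕ)}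
    (h : EvenTrace (l :: l' :: ls)) : l.2 = l'.2 ∧ EvenTrace ls := by
  obtain ⟨hlen, halt, hpairs⟩ := h
  refine ⟨hpairs 0 (by simp), by simp at hlen ⊢; omega, halt.tail.tail, fun i hi => ?_⟩
  exact hpairs (i + 1) (by simp; omega)

theorem EvenTrace.even_sum :
    ∀ {ls : List (Bool × ℕ)}, EvenTrace ls → Even (ls.map Prod.snd).sum
  | [], _ => Even.zero
  | [_], h => absurd h.1 (by simp)
  | _ :: _ :: _, h => by
    obtain ⟨hread, htail⟩ := h.of_cons_cons
    simpa [hread, ← add_assoc] using (Even.add_self _).add htail.even_sum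

theorem GFA.even_length_of_mem_langEven {M : GFA T} {w : List T} (h : w ∈ M.langEven) :
    Even w.length := by
  obtain ⟨x, y, ls, f, rfl, -, htrace, hchain⟩ := h
  simpa [hchain.length_add_length] using htrace.even_sum

def GFA.epsilon (T : Type) : GFA T where
  Q := Unit
  finQ := inferInstance
  start := ()
  accept := Set.univ
  ruleL := ∅
  ruleR := ∅
  finL := Set.finite_empty
  finR := Set.finite_empty

theorem GFA.langEven_epsilon : (GFA.epsilon T).langEven = {[]} := by
  ext w
  constructor
  · rintro ⟨x, y, ls, f, rfl, -, -, hchain⟩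
    cases hchain with
    | nil => rfl
    | cons hstep _ => cases hstep <;> contradiction
  · rintro rfl
    exact ⟨[], [], [], (), rfl, trivial, EvenTrace.nil, .nil _⟩

def GFA.eraseLeftRight (a b : T) : GFA T where
  Q := Unit
  finQ := inferInstance
  start := ()
  accept := Set.univ
  ruleL := {([a], (), ())}
  ruleR := {((), [b], ())}
  finL := Set.finite_singleton _
  finR := Set.finite_singleton _

theorem GFA.eraseLeftRight_chain_eq {a b : T}
    {c c' : List T × (GFA.eraseLeftRight a b).Q × List T} {ls : List (Bool × ℕ)}
    (h : (GFA.eraseLeftRight a b).Chain c ls c') :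
    c.1 = c'.1 ++ List.replicate (ls.countP (·.1)) a ∧
      c.2.2 = List.replicate (ls.countP (!·.1)) b ++ c'.2.2 := by
  induction h with
  | nil c => simp
  | cons hstep _ ih =>
    cases hstep with
    | left hrule =>
      obtain rfl : _ = [a] := congrArg Prod.fst hrule
      simpa [List.replicate_succ', ← List.append_assoc] using ih
    | right hrule =>
      obtain rfl : _ = [b] := congrArg (·.2.1) hrule
      simpa [List.replicate_succ] using ih

theorem Alternating.countP_eq {ls : List (Bool × ℕ)} (halt : Alternating ls)
    (hlen : ls.length % 2 = 0) : ls.countP (·.1) = ls.countP (!·.1) := by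
  induction ls using List.twoStepInduction with
  | nil => rfl
  | singleton => simp at hlen
  | cons_cons l l' ls ih =>
    have hdir : l.1 ≠ l'.1 := (List.isChain_cons_cons.mp halt).1
    have := ih halt.tail.tail (by simp at hlen ⊢; omega)
    cases hl : l.1 <;> cases hl' : l'.1 <;> simp_all [List.countP_cons]

def anbnTrace : ℕ → List (Bool × ℕ)
  | 0 => []
  | n + 1 => (true, 1) :: (false, 1) :: anbnTrace n

theorem evenTrace_anbnTrace (n : ℕ) : EvenTrace (anbnTrace n) := by
  induction n with
  | zero => exact EvenTrace.nil
  | succ n ih =>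
    refine ih.cons_cons (by decide) rfl ?_
    cases n <;> simp [anbnTrace]

theorem GFA.eraseLeftRight_chain_anbnTrace (a b : T) (n : ℕ) :
    (GFA.eraseLeftRight a b).Chain (List.replicate n a, (), List.replicate n b) (anbnTrace n)
      ([], (), []) := by
  induction n with
  | zero => exact .nil _
  | succ n ih =>
    rw [List.replicate_succ', List.replicate_succ]
    exact .cons (.left rfl) (.cons (.right (x := [b]) rfl) ih)

theorem GFA.langEven_eraseLeftRight (a b : T) :
    (GFA.eraseLeftRight a b).langEven = anbn a b := by
  ext w
  constructor
  · rintro ⟨x, y, ls, f, rfl, -, ⟨hlen, halt, -⟩, hchain⟩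
    obtain ⟨rfl, rfl⟩ := GFA.eraseLeftRight_chain_eq hchain
    exact ⟨ls.countP (!·.1), by simp [halt.countP_eq hlen]⟩
  · rintro ⟨n, rfl⟩
    exact ⟨_, _, anbnTrace n, (), rfl, trivial, evenTrace_anbnTrace n,
      GFA.eraseLeftRight_chain_anbnTrace a b n⟩

theorem even_family_incomparable {T : Type} (a b : T) (hab : a ≠ b) :
    Incomparable {L : Set (List T) | ∃ M : GFA T, M.langEven = L}
        {L : Set (List T) | ∃ w : List T, L = {w}} ∧
    Incomparable {L : Set (List T) | ∃ M : GFA T, M.langEven = L}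
        {L : Set (List T) | L.Finite} ∧
    Incomparable {L : Set (List T) | ∃ M : GFA T, M.langEven = L}
        {L : Set (List T) | Language.IsRegular (L : Language T)} := by
  set evenFamily := {L : Set (List T) | ∃ M : GFA T, M.langEven = L}
  set singletons := {L : Set (List T) | ∃ w : List T, L = {w}}
  set finite := {L : Set (List T) | L.Finite}
  set regular := {L : Set (List T) | Language.IsRegular (L : Language T)}
  have hsingletons_finite : singletons ⊆ finite := by
    rintro _ ⟨w, rfl⟩
    exact Set.finite_singleton w
  have hfinite_regular : finite ⊆ regular := fun _ hL => Language.IsRegular.of_finite hL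
  have hanbn : anbn a b ∈ evenFamily \ regular :=
    ⟨⟨_, GFA.langEven_eraseLeftRight a b⟩, not_isRegular_anbn hab⟩
  have hodd : {[a]} ∈ singletons \ evenFamily := by
    refine ⟨⟨[a], rfl⟩, fun ⟨M, hM⟩ => ?_⟩
    simpa using GFA.even_length_of_mem_langEven (hM ▸ rfl : [a] ∈ M.langEven)
  have heps : {[]} ∈ evenFamily ∩ singletons := ⟨⟨_, GFA.langEven_epsilon⟩, ⟨[], rfl⟩⟩
  exact ⟨incomparable_of_witnesses subset_rfl (hsingletons_finite.trans hfinite_regular)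
      hanbn hodd heps,
    incomparable_of_witnesses hsingletons_finite hfinite_regular hanbn hodd heps,
    incomparable_of_witnesses (hsingletons_finite.trans hfinite_regular) subset_rfl
      hanbn hodd heps⟩

end IETW
end

section
/- For every IETWGFA M, there exists an IETWSFA M' = (Q', Σ, R', s', F') such that no rule has s' as its right-hand side, every ε-rule of M' has left-hand side s', and L(M') = L(M')_init-even = L(M)_init-even. -/
namespace IETW

variable {T : Type}

/-!
The simple automaton simulates an initialized even computation of `M` one symbol at a time.
Its first move reads only the middle (at most one) symbol of the word `p ++ z ++ s` erased by the
first move of `M`, where `|p| = |s|`; the head then sits between `p` and `s`, which are erased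
like a pair of moves. Each later pair of moves of `M`, erasing `a` on the left and `b` on the
right with `|a| = |b|`, becomes `|a|` pairs of one-symbol moves, the parts of `a` and `b` still
to be erased being kept in the state. These parts are factors of rule words, so there are
finitely many states. Pairs of ε-moves of `M` are absorbed into an ε-closure, and the type of
the pairs (left move first or right move first), which is fixed along an even computation, is
remembered in the state.
-/

inductive Pairs (t : Bool) : List (Bool × ℕ) → Prop
  | nil : Pairs t []
  | cons (n : ℕ) {ls : List (Bool × ℕ)} (h : Pairs t ls) :
      Pairs t ((t, n) :: (!t, n) :: ls)

theorem evenTrace_cons_cons {x y : Bool × ℕ} {ls : List (Bool × ℕ)} :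
    EvenTrace (x :: y :: ls) ↔
      x.1 ≠ y.1 ∧ x.2 = y.2 ∧ (∀ z ∈ ls.head?, y.1 ≠ z.1) ∧ EvenTrace ls := by
  have hidx : (∀ i, 2 * i + 1 < (x :: y :: ls).length →
      ((x :: y :: ls).getD (2 * i) (true, 0)).2 = ((x :: y :: ls).getD (2 * i + 1) (true, 0)).2) ↔
      x.2 = y.2 ∧ ∀ i, 2 * i + 1 < ls.length →
        (ls.getD (2 * i) (true, 0)).2 = (ls.getD (2 * i + 1) (true, 0)).2 := by
    refine ⟨fun h => ⟨by simpa using h 0 (by simp), fun i hi => ?_⟩, ?_⟩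
    · simpa [Nat.mul_succ] using h (i + 1) (by simp; omega)
    · rintro ⟨h0, h⟩ (_ | i) hi
      · simpa using h0
      · simpa [Nat.mul_succ] using h i (by simp at hi; omega)
  rw [EvenTrace, EvenTrace, hidx, Alternating, Alternating, List.Chain', List.Chain',
    List.isChain_cons_cons, List.isChain_cons, List.length_cons, List.length_cons]
  constructor
  · rintro ⟨hlen, ⟨hxy, hy, hls⟩, h0, hi⟩
    exact ⟨hxy, h0, hy, by omega, hls, hi⟩
  · rintro ⟨hxy, h0, hy, hlen, hls, hi⟩
    exact ⟨by omega, ⟨hxy, hy, hls⟩, h0, hi⟩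

theorem Pairs.evenTrace {t : Bool} {ls : List (Bool × ℕ)} (h : Pairs t ls) :
    EvenTrace ls ∧ ∀ z ∈ ls.head?, z.1 = t := by
  induction h with
  | nil => exact ⟨⟨rfl, List.isChain_nil, fun i hi => by simp at hi⟩, by simp⟩
  | cons n _ ih =>
    refine ⟨evenTrace_cons_cons.mpr ⟨by simp, rfl, fun z hz => ?_, ih.1⟩, by simp⟩
    simp [ih.2 z hz]

theorem EvenTrace.exists_pairs : ∀ {ls : List (Bool × ℕ)}, EvenTrace ls → ∃ t, Pairs t ls
  | [], _ => ⟨true, .nil⟩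
  | [_], h => by simp [EvenTrace] at h
  | (b, n) :: (b', n') :: ls, h => by
    obtain ⟨hb, rfl, hhead, hls⟩ := evenTrace_cons_cons.mp h
    obtain rfl : b' = !b := by revert hb; cases b <;> cases b' <;> simp
    refine ⟨b, ?_⟩
    obtain ⟨t, hp⟩ := hls.exists_pairs
    cases hp with
    | nil => exact .cons n .nil
    | cons m hp' =>
      obtain rfl : t = b := by revert hhead; cases t <;> cases b <;> simp
      exact .cons n (.cons m hp')

theorem _root_.List.exists_eq_append_append_length_eq {α : Type*} (z : List α) :
    ∃ p m s, z = p ++ m ++ s ∧ p.length = s.length ∧ m.length ≤ 1 := by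
  refine ⟨z.take (z.length / 2), (z.drop (z.length / 2)).take (z.length % 2),
    (z.drop (z.length / 2)).drop (z.length % 2), ?_, ?_, ?_⟩
  · rw [List.append_assoc, List.take_append_drop, List.take_append_drop]
  all_goals
    simp only [List.length_take, List.length_drop]
    omega

namespace GFA

variable {M : GFA T}

theorem Chain.append {c c' c'' : List T × M.Q × List T} {ls ls' : List (Bool × ℕ)}
    (h : M.Chain c ls c') (h' : M.Chain c' ls' c'') : M.Chain c (ls ++ ls') c'' := by
  induction h with
  | nil => exact h'
  | cons hs _ ih => exact .cons hs (ih h')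

variable (M) in
inductive PairStep : Bool → M.Q → List T → List T → M.Q → Prop
  | leftRight {q r p : M.Q} {a b : List T} (h₁ : (a, q, r) ∈ M.ruleL)
      (h₂ : (r, b, p) ∈ M.ruleR) : PairStep true q a b p
  | rightLeft {q r p : M.Q} {a b : List T} (h₁ : (q, b, r) ∈ M.ruleR)
      (h₂ : (a, r, p) ∈ M.ruleL) : PairStep false q a b p

theorem PairStep.chain {t : Bool} {q p : M.Q} {a b u v : List T} (h : M.PairStep t q a b p)
    (hl : a.length = b.length) :
    M.Chain (u ++ a, q, b ++ v) [(t, a.length), (!t, a.length)] (u, p, v) := by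
  cases h with
  | leftRight h₁ h₂ => exact .cons (.left h₁) (hl ▸ .cons (.right h₂) (.nil _))
  | rightLeft h₁ h₂ => exact hl ▸ .cons (.right h₁) (hl ▸ .cons (.left h₂) (.nil _))

theorem Step.exists_pairStep {c c₁ c₂ : List T × M.Q × List T} {t : Bool} {n : ℕ}
    (h₁ : M.Step c (t, n) c₁) (h₂ : M.Step c₁ (!t, n) c₂) :
    ∃ u a q b v p, c = (u ++ a, q, b ++ v) ∧ c₂ = (u, p, v) ∧ a.length = n ∧
      b.length = n ∧ M.PairStep t q a b p := by
  generalize hl₁ : (t, n) = l₁ at h₁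
  generalize hl₂ : (!t, n) = l₂ at h₂
  cases h₁ with
  | left h₁ =>
    obtain ⟨rfl, rfl⟩ := Prod.mk.inj hl₁
    cases h₂ with
    | left => simp at hl₂
    | right h₂ =>
      exact ⟨_, _, _, _, _, _, rfl, rfl, rfl, (Prod.mk.inj hl₂).2.symm, .leftRight h₁ h₂⟩
  | right h₁ =>
    obtain ⟨rfl, rfl⟩ := Prod.mk.inj hl₁
    cases h₂ with
    | right => simp at hl₂
    | left h₂ =>
      exact ⟨_, _, _, _, _, _, rfl, rfl, (Prod.mk.inj hl₂).2.symm, rfl, .rightLeft h₁ h₂⟩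

variable (M) in
inductive EvenAccepts (t : Bool) : List T → M.Q → List T → Prop
  | accept {f : M.Q} (hf : f ∈ M.accept) : EvenAccepts t [] f []
  | pair {u v a b : List T} {q p : M.Q} (h : M.PairStep t q a b p) (hl : a.length = b.length)
      (h' : EvenAccepts t u p v) : EvenAccepts t (u ++ a) q (b ++ v)

theorem evenAccepts_iff {t : Bool} {u v : List T} {q : M.Q} :
    M.EvenAccepts t u q v ↔
      ∃ ls f, f ∈ M.accept ∧ M.Chain (u, q, v) ls ([], f, []) ∧ Pairs t ls := by
  constructor
  · intro h
    induction h with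
    | accept hf => exact ⟨[], _, hf, .nil _, .nil⟩
    | pair h hl _ ih =>
      obtain ⟨ls, f, hf, hch, hp⟩ := ih
      exact ⟨_, f, hf, (h.chain hl).append hch, .cons _ hp⟩
  · rintro ⟨ls, f, hf, hch, hp⟩
    induction hp generalizing u q v with
    | nil => cases hch; exact .accept hf
    | cons n _ ih =>
      obtain _ | ⟨h₁, _ | ⟨h₂, hch⟩⟩ := hch
      obtain ⟨u, a, q, b, v, p, ⟨⟩, rfl, ha, hb, h⟩ := h₁.exists_pairStep h₂
      exact .pair h (ha.trans hb.symm) (ih hch)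

variable (M) in
def EpsPairs (t : Bool) : M.Q → M.Q → Prop :=
  Relation.ReflTransGen fun q p => M.PairStep t q [] [] p

theorem EvenAccepts.of_epsPairs {t : Bool} {u v : List T} {q q' : M.Q}
    (hq : M.EpsPairs t q q') (h : M.EvenAccepts t u q' v) : M.EvenAccepts t u q v := by
  induction hq using Relation.ReflTransGen.head_induction_on with
  | refl => exact h
  | head hs _ ih => simpa using EvenAccepts.pair hs rfl ih

variable (M) in
def InitRule (z : List T) (q : M.Q) : Prop :=
  (z, M.start, q) ∈ M.ruleL ∨ (M.start, z, q) ∈ M.ruleR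

theorem Step.exists_initRule {x y : List T} {l : Bool × ℕ} {c : List T × M.Q × List T}
    (h : M.Step (x, M.start, y) l c) :
    ∃ u z v q, x ++ y = u ++ z ++ v ∧ M.InitRule z q ∧ c = (u, q, v) := by
  cases h with
  | left h => exact ⟨_, _, _, _, rfl, .inl h, rfl⟩
  | right h => exact ⟨_, _, _, _, by simp, .inr h, rfl⟩

theorem InitRule.exists_step {z : List T} {q : M.Q} (h : M.InitRule z q) (u v : List T) :
    ∃ x y l, x ++ y = u ++ z ++ v ∧ M.Step (x, M.start, y) l (u, q, v) := by
  rcases h with h | h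
  · exact ⟨_, _, _, rfl, .left h⟩
  · exact ⟨_, _, _, by simp, .right h⟩

theorem mem_langInitEven_iff {w : List T} :
    w ∈ M.langInitEven ↔
      ∃ u z v q t, w = u ++ z ++ v ∧ M.InitRule z q ∧ M.EvenAccepts t u q v := by
  constructor
  · rintro ⟨x, y, _, f, rfl, hf, ⟨l, ls, rfl, hls⟩, _ | ⟨h, hch⟩⟩
    obtain ⟨u, z, v, q, hw, hz, rfl⟩ := h.exists_initRule
    obtain ⟨t, hp⟩ := hls.exists_pairs
    exact ⟨u, z, v, q, t, hw, hz, evenAccepts_iff.mpr ⟨ls, f, hf, hch, hp⟩⟩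
  · rintro ⟨u, z, v, q, t, rfl, hz, hacc⟩
    obtain ⟨ls, f, hf, hch, hp⟩ := evenAccepts_iff.mp hacc
    obtain ⟨x, y, l, hw, h⟩ := hz.exists_step u v
    exact ⟨x, y, l :: ls, f, hw.symm, hf, ⟨l, ls, rfl, hp.evenTrace.1⟩, .cons h hch⟩

theorem langInitEven_subset_lang : M.langInitEven ⊆ M.lang :=
  fun _ ⟨x, y, ls, f, hw, hf, _, hch⟩ => ⟨x, y, ls, f, hw, hf, hch⟩

variable (M) in
/-- `[]` is included so that the buffers of the simple automaton can always be empty. -/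
def words : Set (List T) :=
  insert [] ((fun r => r.1) '' M.ruleL ∪ (fun r => r.2.1) '' M.ruleR)

variable (M) in
def factors : Set (List T) := {l | ∃ z ∈ M.words, l <:+: z}

variable (M) in
theorem finite_factors : M.factors.Finite := by
  have hw : M.words.Finite := ((M.finL.image _).union (M.finR.image _)).insert []
  have : M.factors = ⋃ z ∈ M.words, {l | l <:+: z} := by ext; simp [factors]
  rw [this]
  exact hw.biUnion fun z _ =>
    z.sublists.finite_toSet.subset fun l hl => List.mem_sublists.mpr hl.sublist

theorem factors_of_infix {l l' : List T} (h : l <:+: l') (h' : l' ∈ M.factors) :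
    l ∈ M.factors :=
  let ⟨z, hz, hi⟩ := h'
  ⟨z, hz, h.trans hi⟩

theorem nil_mem_factors : [] ∈ M.factors := ⟨[], Set.mem_insert _ _, List.infix_refl _⟩

theorem InitRule.mem_factors {z : List T} {q : M.Q} (h : M.InitRule z q) : z ∈ M.factors := by
  refine ⟨z, Set.mem_insert_of_mem _ ?_, List.infix_refl z⟩
  rcases h with h | h
  · exact .inl ⟨_, h, rfl⟩
  · exact .inr ⟨_, h, rfl⟩

theorem PairStep.mem_factors {t : Bool} {q p : M.Q} {a b : List T} (h : M.PairStep t q a b p) :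
    a ∈ M.factors ∧ b ∈ M.factors := by
  have hL {a q p} (h : (a, q, p) ∈ M.ruleL) : a ∈ M.factors :=
    ⟨a, Set.mem_insert_of_mem _ (.inl ⟨_, h, rfl⟩), List.infix_refl a⟩
  have hR {b q p} (h : (q, b, p) ∈ M.ruleR) : b ∈ M.factors :=
    ⟨b, Set.mem_insert_of_mem _ (.inr ⟨_, h, rfl⟩), List.infix_refl b⟩
  cases h with
  | leftRight h₁ h₂ => exact ⟨hL h₁, hR h₂⟩
  | rightLeft h₁ h₂ => exact ⟨hL h₂, hR h₁⟩

namespace ToSimple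

variable (M) in
/-- In `buf a b q t`, a pair of type `t` of moves of `M` into `q` is being simulated, and `a`
and `b` remain to be erased on the left and on the right. -/
inductive State
  | start
  | buf (a b : M.factors) (q : M.Q) (t : Bool)

instance : Finite (State M) := by
  have := M.finQ
  have := M.finite_factors.to_subtype
  refine Finite.of_injective (β := Option (M.factors × M.factors × M.Q × Bool))
    (fun | .start => none | .buf a b q t => some (a, b, q, t)) ?_
  rintro (_ | ⟨a, b, q, t⟩) (_ | ⟨a', b', q', t'⟩) h <;> simp_all

def aligned (q : M.Q) (t : Bool) : State M :=
  .buf ⟨[], nil_mem_factors⟩ ⟨[], nil_mem_factors⟩ q t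

variable (M) in
inductive RuleL : List T × State M × State M → Prop
  | init {p z s : List T} {q : M.Q} {t : Bool} (hp : p ∈ M.factors) (hs : s ∈ M.factors)
      (h : M.InitRule (p ++ z ++ s) q) (hl : p.length = s.length) (hz : z.length ≤ 1) :
      RuleL (z, .start, .buf ⟨p, hp⟩ ⟨s, hs⟩ q t)
  | enter {a b : List T} {c : T} {q q' p : M.Q} {t : Bool} (ha : a ∈ M.factors)
      (hb : b ∈ M.factors) (hq : M.EpsPairs t q q') (h : M.PairStep t q' (a ++ [c]) b p)
      (hl : (a ++ [c]).length = b.length) :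
      RuleL ([c], aligned q t, .buf ⟨a, ha⟩ ⟨b, hb⟩ p t)
  | drain {a b : List T} {c : T} {q : M.Q} {t : Bool} (ha : a ∈ M.factors)
      (hac : a ++ [c] ∈ M.factors) (hb : b ∈ M.factors) (hl : (a ++ [c]).length = b.length) :
      RuleL ([c], .buf ⟨a ++ [c], hac⟩ ⟨b, hb⟩ q t, .buf ⟨a, ha⟩ ⟨b, hb⟩ q t)

variable (M) in
inductive RuleR : State M × List T × State M → Prop
  | drain {a b : List T} {c : T} {q : M.Q} {t : Bool} (ha : a ∈ M.factors)
      (hcb : c :: b ∈ M.factors) (hb : b ∈ M.factors) (hl : a.length = b.length) :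
      RuleR (.buf ⟨a, ha⟩ ⟨c :: b, hcb⟩ q t, [c], .buf ⟨a, ha⟩ ⟨b, hb⟩ q t)

theorem RuleL.mem_factors {r : List T × State M × State M} (h : RuleL M r) :
    r.1 ∈ M.factors := by
  cases h with
  | init _ _ h => exact factors_of_infix (List.infix_append _ _ _) h.mem_factors
  | enter _ _ _ h => exact factors_of_infix (List.suffix_append _ _).isInfix h.mem_factors.1
  | drain _ hac => exact factors_of_infix (List.suffix_append _ _).isInfix hac

theorem RuleR.mem_factors {r : State M × List T × State M} (h : RuleR M r) :
    r.2.1 ∈ M.factors := by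
  cases h with
  | drain _ hcb => exact factors_of_infix (List.prefix_append [_] _).isInfix hcb

end ToSimple

open ToSimple

variable (M) in
def toSimple : GFA T where
  Q := State M
  finQ := inferInstance
  start := .start
  accept := {σ | ∃ q t f, f ∈ M.accept ∧ M.EpsPairs t q f ∧ σ = aligned q t}
  ruleL := {r | RuleL M r}
  ruleR := {r | RuleR M r}
  finL := (M.finite_factors.prod Set.finite_univ).subset fun _ h => ⟨h.mem_factors, trivial⟩
  finR := (Set.finite_univ.prod (M.finite_factors.prod Set.finite_univ)).subset
    fun _ h => ⟨trivial, RuleR.mem_factors h, trivial⟩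

theorem simple_toSimple : M.toSimple.Simple :=
  ⟨fun _ h => by cases h <;> first | assumption | exact le_rfl,
    fun _ h => by cases h; exact le_rfl⟩

theorem toSimple_target_ne_start :
    (∀ r ∈ M.toSimple.ruleL, r.2.2 ≠ M.toSimple.start) ∧
      (∀ r ∈ M.toSimple.ruleR, r.2.2 ≠ M.toSimple.start) :=
  ⟨fun _ h => by cases h <;> nofun, fun _ h => by cases h; nofun⟩

theorem toSimple_source_eq_start_of_nil :
    (∀ r ∈ M.toSimple.ruleL, r.1 = [] → r.2.1 = M.toSimple.start) ∧
      (∀ r ∈ M.toSimple.ruleR, r.2.1 = [] → r.1 = M.toSimple.start) :=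
  ⟨fun _ h => by cases h <;> first | exact fun _ => rfl | nofun, fun _ h => by cases h; nofun⟩

namespace ToSimple

theorem start_not_mem_accept : State.start ∉ M.toSimple.accept := by
  rintro ⟨q, t, f, -, -, h⟩
  cases h

theorem exists_chain_drain (u v : List T) (q : M.Q) (t : Bool) {a b : List T}
    (ha : a ∈ M.factors) (hb : b ∈ M.factors)
    (hl : a.length = b.length ∨ a.length + 1 = b.length) :
    ∃ ls, M.toSimple.Chain (u ++ a, .buf ⟨a, ha⟩ ⟨b, hb⟩ q t, b ++ v) ls
      (u, aligned q t, v) := by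
  induction b generalizing a with
  | nil =>
    obtain rfl : a = [] := List.eq_nil_of_length_eq_zero (by simpa using hl)
    exact ⟨[], by simpa using .nil _⟩
  | cons c b ih =>
    have right (a : List T) (ha : a ∈ M.factors) (hl : a.length = b.length) :
        ∃ ls, M.toSimple.Chain (u ++ a, .buf ⟨a, ha⟩ ⟨c :: b, hb⟩ q t, c :: b ++ v) ls
          (u, aligned q t, v) := by
      have hb' : b ∈ M.factors := factors_of_infix (List.suffix_cons c b).isInfix hb
      obtain ⟨ls, h⟩ := ih ha hb' (.inl hl)
      exact ⟨_, .cons (.right (x := [c]) (v := b ++ v) (RuleR.drain ha hb hb' hl)) h⟩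
    rcases hl with hl | hl
    · obtain ⟨a, c', rfl⟩ := a.eq_nil_or_concat'.resolve_left (by rintro rfl; simp at hl)
      have ha' : a ∈ M.factors := factors_of_infix (List.prefix_append a [c']).isInfix ha
      obtain ⟨ls, h⟩ := right a ha' (by simp at hl; omega)
      rw [← List.append_assoc]
      exact ⟨_, .cons (.left (RuleL.drain ha' ha hb hl)) h⟩
    · exact right a ha (by simpa using hl)

theorem exists_chain_pair {t : Bool} {q q' p : M.Q} {a b : List T} (u v : List T)
    (hq : M.EpsPairs t q q') (h : M.PairStep t q' a b p) (hl : a.length = b.length)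
    (ha : a ≠ []) :
    ∃ ls, M.toSimple.Chain (u ++ a, aligned q t, b ++ v) ls (u, aligned p t, v) := by
  obtain ⟨a, c, rfl⟩ := a.eq_nil_or_concat'.resolve_left ha
  have hab := h.mem_factors
  have ha' : a ∈ M.factors := factors_of_infix (List.prefix_append a [c]).isInfix hab.1
  obtain ⟨ls, hch⟩ := exists_chain_drain u v p t ha' hab.2 (.inr (by simpa using hl))
  rw [← List.append_assoc]
  exact ⟨_, .cons (.left (RuleL.enter ha' hab.2 hq h hl)) hch⟩

theorem exists_evenAccepts_of_chain {ls : List (Bool × ℕ)} {u v : List T} {a b : M.factors}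
    {q : M.Q} {t : Bool} {g : State M}
    (h : M.toSimple.Chain (u, .buf a b q t, v) ls ([], g, [])) (hg : g ∈ M.toSimple.accept) :
    ∃ u₁ v₁, u = u₁ ++ a ∧ v = b ++ v₁ ∧ M.EvenAccepts t u₁ q v₁ := by
  induction ls generalizing u v a b q t with
  | nil =>
    cases h
    obtain ⟨q, t, f, hf, hq, h⟩ := hg
    cases h
    exact ⟨[], [], rfl, rfl, .of_epsPairs hq (.accept hf)⟩
  | cons l ls ih =>
    obtain _ | ⟨hs, h⟩ := h
    cases hs with
    | left hr =>
      cases hr with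
      | enter _ _ hq hpair hl =>
        obtain ⟨u₁, v₁, rfl, rfl, hacc⟩ := ih h
        exact ⟨_, _, by simp, by simp, .of_epsPairs hq (.pair hpair hl hacc)⟩
      | drain =>
        obtain ⟨u₁, v₁, rfl, rfl, hacc⟩ := ih h
        exact ⟨u₁, v₁, by simp, rfl, hacc⟩
    | right hr =>
      cases hr with
      | drain =>
        obtain ⟨u₁, v₁, rfl, rfl, hacc⟩ := ih h
        exact ⟨u₁, v₁, rfl, rfl, hacc⟩

theorem pairs_of_chain {ls : List (Bool × ℕ)} {u v : List T} {a b : M.factors}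
    {q : M.Q} {t : Bool} {g : State M}
    (h : M.toSimple.Chain (u, .buf a b q t, v) ls ([], g, [])) (hg : g ∈ M.toSimple.accept) :
    (a.1.length = b.1.length → Pairs true ls) ∧
      (a.1.length + 1 = b.1.length → Pairs true ((true, 1) :: ls)) := by
  induction ls generalizing u v a b q t with
  | nil =>
    cases h
    obtain ⟨q, t, f, hf, hq, h⟩ := hg
    cases h
    exact ⟨fun _ => .nil, by simp⟩
  | cons l ls ih =>
    obtain _ | ⟨hs, h⟩ := h
    cases hs with
    | left hr =>
      cases hr with
      | enter _ _ _ _ hl => exact ⟨fun _ => (ih h).2 (by simpa using hl), by simp⟩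
      | drain _ _ _ hl =>
        exact ⟨fun _ => (ih h).2 (by simpa using hl), fun h' => by simp at hl h'; omega⟩
    | right hr =>
      cases hr with
      | drain _ _ _ hl =>
        exact ⟨fun h' => by simp at h'; omega, fun _ => .cons 1 ((ih h).1 hl)⟩

end ToSimple

theorem EvenAccepts.exists_toSimple_chain {t : Bool} {u v : List T} {q q' : M.Q}
    (h : M.EvenAccepts t u q' v) (hq : M.EpsPairs t q q') :
    ∃ ls g, g ∈ M.toSimple.accept ∧ M.toSimple.Chain (u, aligned q t, v) ls ([], g, []) := by
  induction h generalizing q with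
  | accept hf => exact ⟨[], _, ⟨q, t, _, hf, hq, rfl⟩, .nil _⟩
  | @pair u v a b q' p hs hl _ ih =>
    rcases eq_or_ne a [] with rfl | ha
    · obtain rfl : b = [] := List.eq_nil_of_length_eq_zero (by simpa using hl.symm)
      simpa using ih (hq.tail hs)
    · obtain ⟨ls, g, hg, hch⟩ := ih .refl
      obtain ⟨ls', hpair⟩ := exists_chain_pair u v hq hs hl ha
      exact ⟨_, g, hg, hpair.append hch⟩

theorem toSimple_lang_eq_langInitEven : M.toSimple.lang = M.toSimple.langInitEven := by
  refine Set.Subset.antisymm ?_ langInitEven_subset_lang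
  rintro _ ⟨x, y, ls, g, rfl, hg, h⟩
  refine ⟨x, y, ls, g, rfl, hg, ?_, h⟩
  obtain _ | ⟨hs, hrest⟩ := h
  · exact absurd hg start_not_mem_accept
  cases hs with
  | left hr =>
    cases hr with
    | init _ _ _ hl => exact ⟨_, _, rfl, ((pairs_of_chain hrest hg).1 hl).evenTrace.1⟩
  | right hr => cases hr

theorem toSimple_lang_subset_langInitEven : M.toSimple.lang ⊆ M.langInitEven := by
  rintro _ ⟨x, y, ls, g, rfl, hg, h⟩
  obtain _ | ⟨hs, hrest⟩ := h
  · exact absurd hg start_not_mem_accept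
  cases hs with
  | left hr =>
    cases hr with
    | init _ _ hz =>
      obtain ⟨u, v, rfl, rfl, hacc⟩ := exists_evenAccepts_of_chain hrest hg
      exact mem_langInitEven_iff.mpr ⟨_, _, _, _, _, by simp, hz, hacc⟩
  | right hr => cases hr

theorem langInitEven_subset_toSimple_lang : M.langInitEven ⊆ M.toSimple.lang := by
  intro w hw
  obtain ⟨u, z, v, q, t, rfl, hz, hacc⟩ := mem_langInitEven_iff.mp hw
  obtain ⟨p, m, s, rfl, hl, hm⟩ := z.exists_eq_append_append_length_eq
  have hp : p ∈ M.factors :=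
    factors_of_infix (List.prefix_append p (m ++ s)).isInfix (by simpa using hz.mem_factors)
  have hs : s ∈ M.factors :=
    factors_of_infix (List.suffix_append (p ++ m) s).isInfix hz.mem_factors
  have hinit : M.toSimple.Step (u ++ p ++ m, .start, s ++ v) (true, m.length)
      (u ++ p, .buf ⟨p, hp⟩ ⟨s, hs⟩ q t, s ++ v) :=
    .left (RuleL.init hp hs hz hl hm)
  obtain ⟨ls₁, hdrain⟩ := exists_chain_drain u v q t hp hs (.inl hl)
  obtain ⟨ls₂, g, hg, hrun⟩ := hacc.exists_toSimple_chain .refl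
  exact ⟨_, _, _, g, by simp, hg, .cons hinit (hdrain.append hrun)⟩

end GFA

theorem initeven_ietwgfa_to_ietwsfa {T : Type} (M : GFA T) :
    ∃ M' : GFA T, M'.Simple ∧
      (∀ r ∈ M'.ruleL, r.2.2 ≠ M'.start) ∧
      (∀ r ∈ M'.ruleR, r.2.2 ≠ M'.start) ∧
      (∀ r ∈ M'.ruleL, r.1 = ([] : List T) → r.2.1 = M'.start) ∧
      (∀ r ∈ M'.ruleR, r.2.1 = ([] : List T) → r.1 = M'.start) ∧
      M'.lang = M'.langInitEven ∧ M'.langInitEven = M.langInitEven := by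
  refine ⟨M.toSimple, M.simple_toSimple, M.toSimple_target_ne_start.1,
    M.toSimple_target_ne_start.2, M.toSimple_source_eq_start_of_nil.1,
    M.toSimple_source_eq_start_of_nil.2, M.toSimple_lang_eq_langInitEven, ?_⟩
  rw [← M.toSimple_lang_eq_langInitEven]
  exact M.toSimple_lang_subset_langInitEven.antisymm M.langInitEven_subset_toSimple_lang

end IETW
end
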